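/- arXiv:2203.01779 — 3 statements merged into one kernel-verified Lean document; each statement's English description precedes it below -/
import Mathlib

section
/- Under hypotheses (H1) and (H2), the rank function of the elementary split matroid defined by I = {X ⊆ S : |X| ≤ r, |X ∩ H_i| ≤ r_i for all i} is given by r_M(Z) = min{ r, |Z|, min_{1≤i≤q} (|Z \ H_i| + r_i) } for every Z ⊆ S. -/
/-!
Upper bound: an independent `X ⊆ Z` has `|X| ≤ r`, `|X| ≤ |Z|`, and
`|X| = |X ∩ Hᵢ| + |X \ Hᵢ| ≤ rᵢ + |Z \ Hᵢ|`.

Lower bound: let `X` be an independent subset of `Z` of maximum size with `|X| < r` and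
`X ≠ Z`. Every `z ∈ Z \ X` is then blocked by some `Hᵢ ∋ z` with `|X ∩ Hᵢ| = rᵢ`. If a
single `Hᵢ` blocks all of `Z \ X`, then `Z \ Hᵢ ⊆ X` and `|X| = rᵢ + |Z \ Hᵢ|`. Otherwise two
distinct blocks `Hᵢ, Hⱼ` are tight, and (H1) with inclusion–exclusion gives
`|X| ≥ rᵢ + rⱼ - |Hᵢ ∩ Hⱼ| ≥ r`, a contradiction.
-/

namespace Set

variable {α : Type*}

theorem ncard_le_ncard_diff_add_ncard_inter {X Z : Set α} (A : Set α) (hZ : Z.Finite)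
    (hXZ : X ⊆ Z) : X.ncard ≤ (Z \ A).ncard + (X ∩ A).ncard := by
  have hsplit := ncard_inter_add_ncard_sdiff_eq_ncard X A (hZ.subset hXZ)
  have hdiff : (X \ A).ncard ≤ (Z \ A).ncard :=
    ncard_le_ncard (sdiff_subset_sdiff_left hXZ) hZ.sdiff
  omega

theorem ncard_diff_add_ncard_inter_le_of_diff_subset {X Z A : Set α} (hX : X.Finite)
    (hZXA : Z \ X ⊆ A) : (Z \ A).ncard + (X ∩ A).ncard ≤ X.ncard := by
  have hsplit := ncard_inter_add_ncard_sdiff_eq_ncard X A hX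
  have hdiff : (Z \ A).ncard ≤ (X \ A).ncard :=
    ncard_le_ncard (fun z ⟨hzZ, hzA⟩ => ⟨by_contra fun hzX => hzA (hZXA ⟨hzZ, hzX⟩), hzA⟩)
      hX.sdiff
  omega

theorem ncard_inter_add_ncard_inter_le {X : Set α} (A B : Set α) (hX : X.Finite)
    (hAB : (A ∩ B).Finite) : (X ∩ A).ncard + (X ∩ B).ncard ≤ X.ncard + (A ∩ B).ncard := by
  rw [← ncard_union_add_ncard_inter _ _ (hX.inter_of_left A) (hX.inter_of_left B)]
  exact add_le_add (ncard_le_ncard (union_subset inter_subset_left inter_subset_left) hX)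
    (ncard_le_ncard (fun _ ⟨⟨_, hxA⟩, ⟨_, hxB⟩⟩ => ⟨hxA, hxB⟩) hAB)

end Set

theorem Nat.le_sInf_insert_insert_range_iff {ι : Type*} {n a b : ℕ} {f : ι → ℕ} :
    n ≤ sInf (insert a (insert b (Set.range f))) ↔ n ≤ a ∧ n ≤ b ∧ ∀ i, n ≤ f i := by
  rw [le_csInf_iff (OrderBot.bddBelow _) (Set.insert_nonempty _ _)]
  simp only [Set.mem_insert_iff, Set.mem_range, forall_eq_or_imp, forall_exists_index,
    forall_apply_eq_imp_iff]

namespace ElementarySplit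

open Set

theorem ncard_inter_add_le_of_ne {α ι : Type*} [LinearOrder ι] {r : ℕ} {H : ι → Set α}
    {rr : ι → ℕ} (h : ∀ i j, i < j → (H i ∩ H j).ncard + r ≤ rr i + rr j) {i j : ι}
    (hij : i ≠ j) : (H i ∩ H j).ncard + r ≤ rr i + rr j := by
  rcases hij.lt_or_gt with hlt | hgt
  · exact h i j hlt
  · simpa only [inter_comm, Nat.add_comm (rr j)] using h j i hgt

variable {α ι : Type*} (r : ℕ) (H : ι → Set α) (rr : ι → ℕ)

def Indep (X : Set α) : Prop :=
  X.ncard ≤ r ∧ ∀ i, (X ∩ H i).ncard ≤ rr i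

variable {r H rr}

theorem Indep.ncard_le_ncard_diff_add {X Z : Set α} (hX : Indep r H rr X) (hZ : Z.Finite)
    (hXZ : X ⊆ Z) (i : ι) : X.ncard ≤ (Z \ H i).ncard + rr i :=
  (ncard_le_ncard_diff_add_ncard_inter (H i) hZ hXZ).trans (Nat.add_le_add_left (hX.2 i) _)

theorem Indep.exists_tight_of_not_indep_insert {X : Set α} {z : α} (hX : Indep r H rr X)
    (hXfin : X.Finite) (hzX : z ∉ X) (hz : ¬ Indep r H rr (insert z X)) :
    r ≤ X.ncard ∨ ∃ i, z ∈ H i ∧ rr i ≤ (X ∩ H i).ncard := by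
  by_contra! hfree
  refine hz ⟨?_, fun i => ?_⟩
  · rw [ncard_insert_of_notMem hzX hXfin]
    exact hfree.1
  · by_cases hzi : z ∈ H i
    · rw [insert_inter_of_mem hzi]
      exact (ncard_insert_le _ _).trans (hfree.2 i hzi)
    · rw [insert_inter_of_notMem hzi]
      exact hX.2 i

theorem Indep.bound_le_ncard_of_forall_not_indep_insert {X Z : Set α} (hX : Indep r H rr X)
    (hZ : Z.Finite) (hXZ : X ⊆ Z) (hH : ∀ i, (H i).Finite)
    (hpair : ∀ i j, i ≠ j → (H i ∩ H j).ncard + r ≤ rr i + rr j)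
    (hmax : ∀ z ∈ Z, z ∉ X → ¬ Indep r H rr (insert z X)) :
    r ≤ X.ncard ∨ Z.ncard ≤ X.ncard ∨ ∃ i, (Z \ H i).ncard + rr i ≤ X.ncard := by
  have hXfin := hZ.subset hXZ
  by_cases hr : r ≤ X.ncard
  · exact Or.inl hr
  have tight : ∀ z ∈ Z, z ∉ X → ∃ i, z ∈ H i ∧ rr i ≤ (X ∩ H i).ncard := fun z hzZ hzX =>
    (hX.exists_tight_of_not_indep_insert hXfin hzX (hmax z hzZ hzX)).resolve_left hr
  by_cases hZX : Z ⊆ X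
  · exact Or.inr (Or.inl (ncard_le_ncard hZX hXfin))
  obtain ⟨z, hzZ, hzX⟩ := not_subset.mp hZX
  obtain ⟨i, -, hi⟩ := tight z hzZ hzX
  by_cases hcover : Z \ X ⊆ H i
  · refine Or.inr (Or.inr ⟨i, ?_⟩)
    have := ncard_diff_add_ncard_inter_le_of_diff_subset hXfin hcover
    omega
  obtain ⟨w, ⟨hwZ, hwX⟩, hwi⟩ := not_subset.mp hcover
  obtain ⟨j, hwj, hj⟩ := tight w hwZ hwX
  have hij : i ≠ j := fun h => hwi (h ▸ hwj)
  have := ncard_inter_add_ncard_inter_le (H i) (H j) hXfin ((hH i).inter_of_left _)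
  have := hpair i j hij
  omega

theorem Indep.ncard_le_sInf {X Z : Set α} (hX : Indep r H rr X) (hZ : Z.Finite) (hXZ : X ⊆ Z) :
    X.ncard ≤ sInf (insert r (insert Z.ncard (range fun i => (Z \ H i).ncard + rr i))) :=
  Nat.le_sInf_insert_insert_range_iff.mpr
    ⟨hX.1, ncard_le_ncard hXZ hZ, hX.ncard_le_ncard_diff_add hZ hXZ⟩

theorem not_indep_insert_of_maximalFor {X Z : Set α} {z : α} (hZ : Z.Finite)
    (hX : MaximalFor (fun Y => Y ⊆ Z ∧ Indep r H rr Y) ncard X) (hzZ : z ∈ Z) (hzX : z ∉ X) :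
    ¬ Indep r H rr (insert z X) := fun hz => by
  have hzXZ := insert_subset hzZ hX.prop.1
  have := hX.2 ⟨hzXZ, hz⟩ (ncard_le_ncard (subset_insert z X) (hZ.subset hzXZ))
  rw [ncard_insert_of_notMem hzX (hZ.subset hX.prop.1)] at this
  omega

end ElementarySplit

open ElementarySplit in
theorem elementary_split_rank_formula_general {α : Type*} (S : Set α) (hS : S.Finite)
    (r q : ℕ) (H : Fin q → Set α) (rr : Fin q → ℕ)
    (hHS : ∀ i, H i ⊆ S)
    (h1 : ∀ i j : Fin q, i < j → (H i ∩ H j).ncard + r ≤ rr i + rr j) :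
    ∀ Z ⊆ S, IsGreatest
      {n : ℕ | ∃ X ⊆ Z, (X.ncard ≤ r ∧ ∀ i, (X ∩ H i).ncard ≤ rr i) ∧ X.ncard = n}
      (sInf (insert r (insert Z.ncard (Set.range fun i => (Z \ H i).ncard + rr i)))) := by
  intro Z hZS
  have hZ := hS.subset hZS
  obtain ⟨X, hXmax⟩ := Set.Finite.exists_maximalFor Set.ncard {X | X ⊆ Z ∧ Indep r H rr X}
    (hZ.finite_subsets.subset fun _ h => h.1) ⟨∅, by simp [Indep]⟩
  obtain ⟨hXZ, hX⟩ := hXmax.prop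
  refine ⟨⟨X, hXZ, hX, le_antisymm (hX.ncard_le_sInf hZ hXZ) ?_⟩,
    fun _ ⟨Y, hYZ, hY, hYn⟩ => hYn ▸ Indep.ncard_le_sInf hY hZ hYZ⟩
  rcases hX.bound_le_ncard_of_forall_not_indep_insert hZ hXZ (fun i => hS.subset (hHS i))
    (fun _ _ => ncard_inter_add_le_of_ne h1)
    (fun _ hzZ hzX => not_indep_insert_of_maximalFor hZ hXmax hzZ hzX) with h | h | ⟨i, h⟩ <;>
    exact (Nat.sInf_le (by simp)).trans h

/-- Under (H1) and (H2), the rank of `Z` in the elementary split matroid, i.e. the maximum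
size of a member of `I = {X ⊆ S : |X| ≤ r, |X ∩ Hᵢ| ≤ rᵢ}` contained in `Z`, equals
`min {r, |Z|, min_i (|Z \ Hᵢ| + rᵢ)}`. -/
theorem elementary_split_rank_formula {α : Type*} (S : Set α) (hS : S.Finite)
    (r q : ℕ) (H : Fin q → Set α) (rr : Fin q → ℕ)
    (hHS : ∀ i, H i ⊆ S) (hSr : r ≤ S.ncard)
    (h1 : ∀ i j : Fin q, i < j → (H i ∩ H j).ncard + r ≤ rr i + rr j)
    (h2 : ∀ i : Fin q, r ≤ (S \ H i).ncard + rr i) :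
    ∀ Z ⊆ S, IsGreatest
      {n : ℕ | ∃ X ⊆ Z, (X.ncard ≤ r ∧ ∀ i, (X ∩ H i).ncard ≤ rr i) ∧ X.ncard = n}
      (sInf (insert r (insert Z.ncard (Set.range fun i => (Z \ H i).ncard + rr i)))) :=
  elementary_split_rank_formula_general S hS r q H rr hHS h1
end

section
/- Let M be a rank-r elementary split matroid with non-redundant representation by hyperedges H_1, …, H_q and bounds r_1, …, r_q. If F ⊆ S has |F| = r and |F ∩ H_i| = r_i for some index i, then F is a basis of M. -/
/-! If `F` met some `Hⱼ` in more than `rⱼ` points, then, `F` being `Hᵢ`-tight of size `r`,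
inclusion–exclusion inside `F` would give `|Hᵢ ∩ Hⱼ| ≥ |F ∩ Hᵢ ∩ Hⱼ| > rᵢ + rⱼ - r`, against (H1).
So `F` is independent, and an independent set of the maximal size `r` is a basis. -/

theorem Set.ncard_inter_add_ncard_inter_le_s4 {α : Type*} {F A B : Set α} (hF : F.Finite)
    (hAB : (A ∩ B).Finite) :
    (F ∩ A).ncard + (F ∩ B).ncard ≤ F.ncard + (A ∩ B).ncard := by
  rw [← Set.ncard_union_add_ncard_inter _ _ (hF.inter_of_left _) (hF.inter_of_left _)]
  exact add_le_add
    (Set.ncard_le_ncard (Set.union_subset Set.inter_subset_left Set.inter_subset_left) hF)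
    (Set.ncard_le_ncard (fun x hx ↦ ⟨hx.1.2, hx.2.2⟩) hAB)

theorem Matroid.Indep.isBase_of_ncard_eq {α : Type*} {M : Matroid α} {r : ℕ}
    (hr : ∀ X, M.Indep X → X.ncard ≤ r) {I : Set α} (hI : M.Indep I) (hIfin : I.Finite)
    (hIr : I.ncard = r) : M.IsBase I := by
  refine hI.isBase_of_forall_insert fun e he hins ↦ ?_
  have hcard := hr _ hins
  rw [Set.ncard_insert_of_notMem he.2 hIfin] at hcard
  omega

theorem tight_set_is_basis_general {α : Type*} (M : Matroid α) (hfin : M.E.Finite)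
    (r q : ℕ) (H : Fin q → Set α) (rr : Fin q → ℕ)
    (hHS : ∀ i, H i ⊆ M.E)
    (h1 : ∀ i j : Fin q, i < j → (H i ∩ H j).ncard + r ≤ rr i + rr j)
    (hInd : ∀ X : Set α, M.Indep X ↔ X ⊆ M.E ∧ X.ncard ≤ r ∧ ∀ i, (X ∩ H i).ncard ≤ rr i)
    (F : Set α) (hF : F ⊆ M.E) (hFcard : F.ncard = r)
    (i : Fin q) (htight : (F ∩ H i).ncard = rr i) :
    M.IsBase F := by
  have hFfin : F.Finite := hfin.subset hF
  have hmeet : ∀ j, (F ∩ H j).ncard ≤ rr j := by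
    intro j
    obtain rfl | hij := eq_or_ne i j
    · exact htight.le
    have hpair : (H i ∩ H j).ncard + r ≤ rr i + rr j := by
      rcases hij.lt_or_gt with hlt | hgt
      · exact h1 i j hlt
      · simpa only [Set.inter_comm, add_comm] using h1 j i hgt
    have hincl := Set.ncard_inter_add_ncard_inter_le_s4 hFfin
      (A := H i) (B := H j) ((hfin.subset (hHS i)).inter_of_left _)
    omega
  have hFind : M.Indep F := (hInd F).2 ⟨hF, hFcard.le, hmeet⟩
  exact hFind.isBase_of_ncard_eq (fun X hX ↦ ((hInd X).1 hX).2.1) hFfin hFcard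

/-- In a rank-`r` elementary split matroid with a non-redundant representation, a set `F` of
size `r` that is `Hᵢ`-tight for some `i` is a basis. -/
theorem tight_set_is_basis {α : Type*} (M : Matroid α) (hfin : M.E.Finite)
    (r q : ℕ) (H : Fin q → Set α) (rr : Fin q → ℕ)
    (hHS : ∀ i, H i ⊆ M.E)
    (h1 : ∀ i j : Fin q, i < j → (H i ∩ H j).ncard + r ≤ rr i + rr j)
    (h2 : ∀ i : Fin q, r ≤ (M.E \ H i).ncard + rr i)
    (h3 : ∀ i : Fin q, rr i + 1 ≤ r)
    (h4 : ∀ i : Fin q, rr i + 1 ≤ (H i).ncard)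
    (hInd : ∀ X : Set α, M.Indep X ↔ X ⊆ M.E ∧ X.ncard ≤ r ∧ ∀ i, (X ∩ H i).ncard ≤ rr i)
    (F : Set α) (hF : F ⊆ M.E) (hFcard : F.ncard = r)
    (i : Fin q) (htight : (F ∩ H i).ncard = rr i) :
    M.IsBase F :=
  tight_set_is_basis_general M hfin r q H rr hHS h1 hInd F hF hFcard i htight
end

section
/- Let (A_1, A_2) and (B_1, B_2) be compatible basis pairs of a rank-r paving matroid M with A_1 ∩ A_2 = ∅. Then there exists a strictly monotone sequence of symmetric exchanges for (A_1, A_2) and (B_1, B_2) of length at least r − |A_1 ∩ B_1| − 2. -/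
/-!
In a paving matroid of rank `r` every circuit has at least `r` elements, so for a base `X` and
`x ∉ X` the fundamental circuit of `x` misses at most one element of `X`: `X - a + x` is a base
for all but at most one `a ∈ X`. Given disjoint bases `X₁, X₂` with `B₁ ⊆ X₁ ∪ X₂` and
`|X₁ \ B₁| ≥ 3`, pick `f₁ ≠ f₂` in `B₁ \ X₁ ⊆ X₂`. They rule out at most two choices of
`e ∈ X₁ \ B₁` for `X₁ - e + fᵢ`, and for the remaining `e` at most one `fᵢ` fails to make
`X₂ + e - fᵢ` a base. The resulting exchange lowers `|X₁ \ B₁|` by one and keeps the pair disjoint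
and covering `B₁`, so it can be repeated `|A₁ \ B₁| - 2 = r - |A₁ ∩ B₁| - 2` times.
-/

/-- A symmetric exchange on an ordered pair of bases. -/
def SymExch {α : Type*} (M : Matroid α) (p p' : Set α × Set α) : Prop :=
  ∃ e ∈ p.1 \ p.2, ∃ f ∈ p.2 \ p.1,
    p'.1 = insert f (p.1 \ {e}) ∧ p'.2 = (insert e p.2) \ {f} ∧
    M.IsBase p'.1 ∧ M.IsBase p'.2

open Set

theorem exists_chain_of_step {β : Type*} {R : β → β → Prop} {P : β → Prop} {μ : β → ℕ} {k : ℕ}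
    (step : ∀ x, P x → k < μ x → ∃ y, P y ∧ R x y ∧ μ y + 1 = μ x) {x : β} (hx : P x) :
    ∃ p : ℕ → β, p 0 = x ∧ ∀ j < μ x - k, R (p j) (p (j + 1)) ∧ μ (p (j + 1)) < μ (p j) := by
  induction hn : μ x - k generalizing x with
  | zero => exact ⟨fun _ ↦ x, rfl, by simp⟩
  | succ n ih =>
    obtain ⟨y, hy, hxy, hμ⟩ := step x hx (by omega)
    obtain ⟨p, rfl, hp⟩ := ih hy (by omega)
    refine ⟨fun | 0 => x | j + 1 => p j, rfl, fun j hj ↦ ?_⟩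
    cases j with
    | zero => exact ⟨hxy, by dsimp only; omega⟩
    | succ j => exact hp j (by omega)

lemma Set.ncard_insert_sdiff_singleton_sdiff_add_one {α : Type*} {X B : Set α} {e f : α}
    (hX : X.Finite) (he : e ∈ X \ B) (hf : f ∈ B) :
    (insert f (X \ {e}) \ B).ncard + 1 = (X \ B).ncard := by
  rw [insert_sdiff_of_mem _ hf, sdiff_sdiff_comm, ncard_sdiff_singleton_add_one he hX.sdiff]

section SymExch

variable {α : Type*} {M : Matroid α} {p q : Set α × Set α}

lemma SymExch.isBase_fst (h : SymExch M p q) : M.IsBase q.1 :=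
  let ⟨_, _, _, _, _, _, h₁, _⟩ := h; h₁

lemma SymExch.isBase_snd (h : SymExch M p q) : M.IsBase q.2 :=
  let ⟨_, _, _, _, _, _, _, h₂⟩ := h; h₂

lemma SymExch.union_eq (h : SymExch M p q) : q.1 ∪ q.2 = p.1 ∪ p.2 := by
  obtain ⟨e, he, f, hf, h₁, h₂, -, -⟩ := h
  ext y
  simp only [h₁, h₂, mem_union, mem_insert_iff, mem_sdiff, mem_singleton_iff] at he hf ⊢
  grind

lemma SymExch.inter_eq (h : SymExch M p q) : q.1 ∩ q.2 = p.1 ∩ p.2 := by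
  obtain ⟨e, he, f, hf, h₁, h₂, -, -⟩ := h
  ext y
  simp only [h₁, h₂, mem_inter_iff, mem_insert_iff, mem_sdiff, mem_singleton_iff] at he hf ⊢
  grind

end SymExch

namespace Matroid

variable {α : Type*} {M : Matroid α} {r : ℕ} {B C X X₁ X₂ : Set α} {x : α}

/-- The paving condition when `r` is the rank of `M`. -/
def IsPaving (M : Matroid α) (r : ℕ) : Prop :=
  ∀ I ⊆ M.E, I.ncard + 1 ≤ r → M.Indep I

lemma IsPaving.le_ncard_of_isCircuit (hM : M.IsPaving r) (hC : M.IsCircuit C) :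
    r ≤ C.ncard := by
  by_contra! h
  exact hC.dep.not_indep (hM C hC.subset_ground (by omega))

lemma IsPaving.subsingleton_not_isBase_exchange (hM : M.IsPaving r) [M.RankFinite]
    (hX : M.IsBase X) (hXr : X.ncard = r) (hx : x ∈ M.E \ X) :
    {a ∈ X | ¬ M.IsBase (insert x X \ {a})}.Subsingleton := by
  set C := M.fundCircuit x X
  have hCX : C ⊆ insert x X := M.fundCircuit_subset_insert x X
  have hfin : (insert x X).Finite := hX.finite.insert x
  have hbad : {a ∈ X | ¬ M.IsBase (insert x X \ {a})} ⊆ insert x X \ C := by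
    rintro a ⟨haX, hnot⟩
    refine ⟨mem_insert_of_mem x haX, fun haC ↦ hnot (hX.exchange_isBase_of_indep' haX hx.2 ?_)⟩
    exact (hX.indep.mem_fundCircuit_iff (by rw [hX.closure_eq]; exact hx.1) hx.2).1 haC
  have hCr : r ≤ C.ncard := hM.le_ncard_of_isCircuit (hX.fundCircuit_isCircuit hx.1 hx.2)
  have hcard : (insert x X \ C).ncard ≤ 1 := by
    rw [ncard_sdiff hCX (hfin.subset hCX), ncard_insert_of_notMem hx.2 hX.finite]
    omega
  exact (ncard_le_one (hfin.sdiff.subset hbad)).1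
    ((ncard_le_ncard hbad hfin.sdiff).trans hcard)

lemma IsPaving.exists_symExch (hM : M.IsPaving r) [M.RankFinite] (hX₁ : M.IsBase X₁)
    (hX₂ : M.IsBase X₂) (hdisj : X₁ ∩ X₂ = ∅) (hB : M.IsBase B) (hBr : B.ncard = r)
    (hBX : B ⊆ X₁ ∪ X₂) (hB₃ : 2 < (X₁ \ B).ncard) :
    ∃ e ∈ X₁ \ B, ∃ f ∈ B \ X₁, SymExch M (X₁, X₂) (insert f (X₁ \ {e}), insert e X₂ \ {f}) := by
  have hBX₂ : B \ X₁ ⊆ X₂ := fun y hy ↦ (hBX hy.1).resolve_left hy.2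
  have hX₁r : X₁.ncard = r := (hX₁.ncard_eq_ncard_of_isBase hB).trans hBr
  have hX₂r : X₂.ncard = r := (hX₂.ncard_eq_ncard_of_isBase hB).trans hBr
  obtain ⟨f₁, hf₁, f₂, hf₂, hf₁₂⟩ := (one_lt_ncard hB.finite.sdiff).1
    (by rw [hB.ncard_sdiff_comm hX₁]; omega)
  set S : α → Set α := fun f ↦ {e ∈ X₁ | ¬ M.IsBase (insert f X₁ \ {e})}
  have hS : ∀ f ∈ B \ X₁, (S f).Subsingleton := fun f hf ↦
    hM.subsingleton_not_isBase_exchange hX₁ hX₁r ⟨hB.subset_ground hf.1, hf.2⟩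
  have hS₁₂ : (S f₁ ∪ S f₂).ncard < (X₁ \ B).ncard := by
    have := ncard_union_le (S f₁) (S f₂)
    have := (ncard_le_one (hS f₁ hf₁).finite).2 (hS f₁ hf₁)
    have := (ncard_le_one (hS f₂ hf₂).finite).2 (hS f₂ hf₂)
    omega
  obtain ⟨e, he, heS⟩ := exists_mem_notMem_of_ncard_lt_ncard hS₁₂
    ((hS f₁ hf₁).finite.union (hS f₂ hf₂).finite)
  have heX₂ : e ∉ X₂ := fun h ↦ (hdisj.subset ⟨he.1, h⟩ : e ∈ (∅ : Set α))
  obtain ⟨f, hf, hfS, heX₂f⟩ : ∃ f ∈ B \ X₁, e ∉ S f ∧ M.IsBase (insert e X₂ \ {f}) := by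
    by_cases h₁ : M.IsBase (insert e X₂ \ {f₁})
    · exact ⟨f₁, hf₁, fun h ↦ heS (Or.inl h), h₁⟩
    refine ⟨f₂, hf₂, fun h ↦ heS (Or.inr h), by_contra fun h₂ ↦ hf₁₂ ?_⟩
    exact hM.subsingleton_not_isBase_exchange hX₂ hX₂r ⟨hX₁.subset_ground he.1, heX₂⟩
      ⟨hBX₂ hf₁, h₁⟩ ⟨hBX₂ hf₂, h₂⟩
  have hfe : f ≠ e := fun h ↦ hf.2 (h ▸ he.1)
  refine ⟨e, he, f, hf, e, ⟨he.1, heX₂⟩, f, ⟨hBX₂ hf, hf.2⟩, rfl, rfl, ?_, heX₂f⟩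
  rw [insert_sdiff_singleton_comm hfe]
  exact by_contra fun h ↦ hfS ⟨he.1, h⟩

end Matroid

theorem paving_monotone_sequence_general {α : Type*} (M : Matroid α) (r : ℕ)
    (hpaving : ∀ I ⊆ M.E, I.ncard + 1 ≤ r → M.Indep I)
    (A₁ A₂ B₁ B₂ : Set α)
    (hA₁ : M.IsBase A₁) (hA₂ : M.IsBase A₂) (hB₁ : M.IsBase B₁)
    (hr : A₁.ncard = r) (hdisj : A₁ ∩ A₂ = ∅)
    (hcup : A₁ ∪ A₂ = B₁ ∪ B₂) :
    ∃ n : ℕ, r - (A₁ ∩ B₁).ncard - 2 ≤ n ∧ ∃ p : ℕ → Set α × Set α, p 0 = (A₁, A₂) ∧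
      ∀ j < n, SymExch M (p j) (p (j + 1)) ∧
        ((p (j + 1)).1 \ B₁).ncard < ((p j).1 \ B₁).ncard := by
  obtain hfin | hinf := A₁.finite_or_infinite
  swap
  · exact ⟨0, by simp [← hr, hinf.ncard], fun _ ↦ (A₁, A₂), rfl, by simp⟩
  have := hA₁.rankFinite_of_finite hfin
  have hM : M.IsPaving r := hpaving
  have hB₁r : B₁.ncard = r := (hB₁.ncard_eq_ncard_of_isBase hA₁).trans hr
  let P : Set α × Set α → Prop := fun q ↦
    M.IsBase q.1 ∧ M.IsBase q.2 ∧ q.1 ∩ q.2 = ∅ ∧ B₁ ⊆ q.1 ∪ q.2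
  have step : ∀ q, P q → 2 < (q.1 \ B₁).ncard →
      ∃ q', P q' ∧ SymExch M q q' ∧ (q'.1 \ B₁).ncard + 1 = (q.1 \ B₁).ncard := by
    rintro ⟨X₁, X₂⟩ ⟨hX₁, hX₂, hX₁₂, hB₁X⟩ hB₁₃
    obtain ⟨e, he, f, hf, hex⟩ := hM.exists_symExch hX₁ hX₂ hX₁₂ hB₁ hB₁r hB₁X hB₁₃
    exact ⟨_, ⟨hex.isBase_fst, hex.isBase_snd, hex.inter_eq ▸ hX₁₂, hex.union_eq ▸ hB₁X⟩, hex,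
      ncard_insert_sdiff_singleton_sdiff_add_one hX₁.finite he hf.1⟩
  obtain ⟨p, hp0, hp⟩ := exists_chain_of_step step (x := (A₁, A₂))
    ⟨hA₁, hA₂, hdisj, hcup ▸ subset_union_left⟩
  refine ⟨(A₁ \ B₁).ncard - 2, ?_, p, hp0, hp⟩
  have := ncard_inter_add_ncard_sdiff_eq_ncard A₁ B₁ hfin
  omega

/-- Compatible basis pairs of a rank-`r` paving matroid with `A₁ ∩ A₂ = ∅` admit a strictly
monotone sequence of symmetric exchanges of length at least `r - |A₁ ∩ B₁| - 2`. -/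
theorem paving_monotone_sequence {α : Type*} (M : Matroid α) (hfin : M.E.Finite) (r : ℕ)
    (hpaving : ∀ I ⊆ M.E, I.ncard + 1 ≤ r → M.Indep I)
    (A₁ A₂ B₁ B₂ : Set α)
    (hA₁ : M.IsBase A₁) (hA₂ : M.IsBase A₂) (hB₁ : M.IsBase B₁) (hB₂ : M.IsBase B₂)
    (hr : A₁.ncard = r) (hdisj : A₁ ∩ A₂ = ∅)
    (hcap : A₁ ∩ A₂ = B₁ ∩ B₂) (hcup : A₁ ∪ A₂ = B₁ ∪ B₂) :
    ∃ n : ℕ, r - (A₁ ∩ B₁).ncard - 2 ≤ n ∧ ∃ p : ℕ → Set α × Set α, p 0 = (A₁, A₂) ∧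
      ∀ j < n, SymExch M (p j) (p (j + 1)) ∧
        ((p (j + 1)).1 \ B₁).ncard < ((p j).1 \ B₁).ncard :=
  paving_monotone_sequence_general M r hpaving A₁ A₂ B₁ B₂ hA₁ hA₂ hB₁ hr hdisj hcup
end
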